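/- For all nonnegative integers m, n \geq 0, \sum_{j=0}^{\min(m,n)} q^{(m-j)(n-j)} \frac{1}{(q)_{m-j}(q)_{n-j}(q)_j} = \frac{1}{(q)_m (q)_n} as rational functions of q. -/

import Mathlib

/-- The q-Pochhammer symbol `(q;q)_k = ∏_{i=1}^k (1 - qⁱ)` as a rational function of `q`. -/
noncomputable def qPoch (k : ℕ) : RatFunc ℚ :=
  ∏ i ∈ Finset.range k, (1 - RatFunc.X ^ (i + 1))

namespace DurfeeAux
open Finset

lemma one_sub_pow_ne (k : ℕ) : (1 - RatFunc.X ^ (k+1) : RatFunc ℚ) ≠ 0 := by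
  intro h
  have h1 : (RatFunc.X : RatFunc ℚ)^(k+1) = 1 := by linear_combination -h
  rw [← RatFunc.algebraMap_X, ← map_pow, ← map_one (algebraMap (Polynomial ℚ) (RatFunc ℚ))] at h1
  have h2 := RatFunc.algebraMap_injective ℚ h1
  have := congrArg Polynomial.natDegree h2
  simp [Polynomial.natDegree_X_pow] at this

lemma qPoch_ne (k : ℕ) : qPoch k ≠ 0 := by
  rw [qPoch]
  exact Finset.prod_ne_zero_iff.2 fun i _ => one_sub_pow_ne i

lemma qPoch_succ (k : ℕ) : qPoch (k+1) = qPoch k * (1 - RatFunc.X ^ (k+1)) :=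
  Finset.prod_range_succ _ _

@[simp] lemma qPoch_zero : qPoch 0 = 1 := rfl

noncomputable def tt (m n j : ℕ) : RatFunc ℚ :=
  RatFunc.X ^ ((m-j)*(n-j)) / (qPoch (m-j) * qPoch (n-j) * qPoch j)

noncomputable def bb (m n j : ℕ) : RatFunc ℚ :=
  if 1 ≤ j ∧ j ≤ m then
    RatFunc.X ^ ((m-j)*(n+1-j)+(n+1-j)) / (qPoch (m-j) * qPoch (n+1-j) * qPoch (j-1))
  else 0

lemma tt_symm (m n j : ℕ) : tt m n j = tt n m j := by
  simp only [tt]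
  rw [Nat.mul_comm]
  ring

lemma key_a {F : Type*} [Field F] (x A D W E Pa Pd Pj : F)
    (ha : Pa ≠ 0) (hd : Pd ≠ 0) (hj : Pj ≠ 0)
    (ha' : 1 - A*x ≠ 0) (hd' : 1 - D*x ≠ 0) (hj' : 1 - W*x ≠ 0) :
    (1 - W*D*x^2) * (E*A*D*x / (Pa*(1-A*x)*(Pd*(1-D*x))*(Pj*(1-W*x))))
      = E*D/(Pa*(1-A*x)*Pd*(Pj*(1-W*x)))
        + (E*A*D^2*x^2/(Pa*(1-A*x)*(Pd*(1-D*x))*Pj)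
          - E*D/(Pa*Pd*(Pj*(1-W*x)))) := by
  rw [div_sub_div _ _ (by simp [ha, hd, hj, ha', hd', hj', mul_ne_zero])
        (by simp [ha, hd, hj, ha', hd', hj', mul_ne_zero]),
    div_add_div _ _ (by simp [ha, hd, hj, ha', hd', hj', mul_ne_zero])
        (by simp [ha, hd, hj, ha', hd', hj', mul_ne_zero]),
    mul_div_assoc',
    div_eq_div_iff (by simp [ha, hd, hj, ha', hd', hj', mul_ne_zero])
        (by simp [ha, hd, hj, ha', hd', hj', mul_ne_zero])]
  ring

lemma key_b {F : Type*} [Field F] (x D W Pe Pj : F)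
    (he : Pe ≠ 0) (hj : Pj ≠ 0) (hd' : 1 - D*x ≠ 0) (hj' : 1 - W*x ≠ 0) :
    (1 - W*D*x^2) * (1/((Pe*(1-D*x))*(Pj*(1-W*x))))
      = 1/(Pe*(Pj*(1-W*x))) + D*x/((Pe*(1-D*x))*Pj) := by
  rw [div_add_div _ _ (by simp [he, hj, hd', hj', mul_ne_zero])
        (by simp [he, hj, hd', hj', mul_ne_zero]),
    mul_div_assoc',
    div_eq_div_iff (by simp [he, hj, hd', hj', mul_ne_zero])
        (by simp [he, hj, hd', hj', mul_ne_zero])]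
  ring

lemma case_a0 (a d : ℕ) :
    (1 - RatFunc.X^(d+1)) * tt (a+1) (d+1) 0
      = tt (a+1) d 0 + (bb (a+1) d 0 - bb (a+1) d 1) := by
  have h1 := one_sub_pow_ne a
  have h2 := one_sub_pow_ne d
  have h3 := qPoch_ne a
  have h4 := qPoch_ne d
  simp only [tt, bb, Nat.sub_zero, Nat.le_refl, Nat.zero_le, true_and, if_true,
    if_neg (by omega : ¬ (1 ≤ 0 ∧ 0 ≤ a+1)), Nat.add_sub_cancel, Nat.succ_sub_one,
    qPoch_zero, mul_one, sub_zero, zero_sub, one_mul,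
    show ¬ (1 ≤ 0) by omega, show 1 ≤ a+1 by omega, false_and, if_false]
  rw [qPoch_succ d, qPoch_succ a]
  field_simp
  ring

lemma case_a1 (i a d : ℕ) :
    (1 - RatFunc.X^(i+1+d+1)) * tt (i+1+(a+1)) (i+1+d+1) (i+1)
      = tt (i+1+(a+1)) (i+1+d) (i+1) + (bb (i+1+(a+1)) (i+1+d) (i+1)
        - bb (i+1+(a+1)) (i+1+d) (i+2)) := by
  have ha' : (1 - RatFunc.X^a * RatFunc.X : RatFunc ℚ) ≠ 0 := by
    intro h; exact one_sub_pow_ne a (by linear_combination h)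
  have hd' : (1 - RatFunc.X^d * RatFunc.X : RatFunc ℚ) ≠ 0 := by
    intro h; exact one_sub_pow_ne d (by linear_combination h)
  have hi' : (1 - RatFunc.X^i * RatFunc.X : RatFunc ℚ) ≠ 0 := by
    intro h; exact one_sub_pow_ne i (by linear_combination h)
  simp only [tt, bb,
    if_pos (by omega : (1 ≤ i+1 ∧ i+1 ≤ i+1+(a+1))),
    if_pos (by omega : (1 ≤ i+2 ∧ i+2 ≤ i+1+(a+1))),
    show i+1+(a+1)-(i+1) = a+1 by omega,
    show i+1+d+1-(i+1) = d+1 by omega,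
    show i+1+d-(i+1) = d by omega,
    show i+1+(a+1)-(i+2) = a by omega,
    show i+1+d+1-(i+2) = d by omega,
    show i+1-1 = i by omega,
    show i+2-1 = i+1 by omega]
  rw [qPoch_succ d, qPoch_succ a, qPoch_succ i]
  simp only [pow_succ]
  linear_combination key_a RatFunc.X (RatFunc.X^a) (RatFunc.X^d) (RatFunc.X^i)
    (RatFunc.X^(a*d)) (qPoch a) (qPoch d) (qPoch i)
    (qPoch_ne a) (qPoch_ne d) (qPoch_ne i) ha' hd' hi'

lemma case_b0 (e : ℕ) :
    (1 - RatFunc.X^(e+1)) * tt 0 (e+1) 0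
      = tt 0 e 0 + (bb 0 e 0 - bb 0 e 1) := by
  simp only [tt, bb, Nat.sub_zero, Nat.zero_sub, Nat.zero_le,
    if_neg (by omega : ¬ (1 ≤ 0 ∧ 0 ≤ 0)), if_neg (by omega : ¬ (1 ≤ 1 ∧ 1 ≤ 0)),
    qPoch_zero, mul_one, one_mul, sub_zero, sub_self, add_zero, Nat.zero_mul, pow_zero,
    show ¬ (1 ≤ 0) by omega, false_and, and_false, if_false]
  rw [qPoch_succ e]
  field_simp [qPoch_ne e, one_sub_pow_ne e]

lemma case_b (i e : ℕ) :
    (1 - RatFunc.X^(i+1+e+1)) * tt (i+1) (i+1+e+1) (i+1)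
      = tt (i+1) (i+1+e) (i+1) + (bb (i+1) (i+1+e) (i+1)
        - bb (i+1) (i+1+e) (i+2)) := by
  have hd' : (1 - RatFunc.X^e * RatFunc.X : RatFunc ℚ) ≠ 0 := by
    intro h; exact one_sub_pow_ne e (by linear_combination h)
  have hi' : (1 - RatFunc.X^i * RatFunc.X : RatFunc ℚ) ≠ 0 := by
    intro h; exact one_sub_pow_ne i (by linear_combination h)
  simp only [tt, bb,
    if_pos (by omega : (1 ≤ i+1 ∧ i+1 ≤ i+1)),
    if_neg (by omega : ¬ (1 ≤ i+2 ∧ i+2 ≤ i+1)),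
    Nat.sub_self,
    show i+1+e+1-(i+1) = e+1 by omega,
    show i+1+e-(i+1) = e by omega,
    show i+1-1 = i by omega,
    Nat.zero_mul, zero_add, pow_zero, qPoch_zero, one_mul, sub_zero]
  rw [qPoch_succ e, qPoch_succ i]
  simp only [pow_succ]
  linear_combination key_b RatFunc.X (RatFunc.X^e) (RatFunc.X^i)
    (qPoch e) (qPoch i) (qPoch_ne e) (qPoch_ne i) hd' hi'

lemma case_b' (m n : ℕ) (hmn : m ≤ n) :
    (1 - RatFunc.X^(n+1)) * tt m (n+1) m
      = tt m n m + (bb m n m - bb m n (m+1)) := by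
  rcases m with _ | i
  · exact case_b0 n
  · obtain ⟨e, rfl⟩ : ∃ e, n = i + 1 + e := ⟨n - i - 1, by omega⟩
    exact case_b i e

lemma Ej (m n j : ℕ) (hjm : j ≤ m) (hjn : j ≤ n) (hside : j < m ∨ m ≤ n) :
    (1 - RatFunc.X^(n+1)) * tt m (n+1) j
      = tt m n j + (bb m n j - bb m n (j+1)) := by
  rcases Nat.lt_or_ge j m with hlt | hge
  · rcases j with _ | i
    · obtain ⟨a, rfl⟩ : ∃ a, m = a + 1 := ⟨m - 1, by omega⟩
      exact case_a0 a n
    · obtain ⟨a, rfl⟩ : ∃ a, m = i + 1 + (a + 1) := ⟨m - i - 2, by omega⟩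
      obtain ⟨d, rfl⟩ : ∃ d, n = i + 1 + d := ⟨n - i - 1, by omega⟩
      exact case_a1 i a d
  · have hjm' : j = m := by omega
    rw [hjm']
    exact case_b' m n (by omega)

lemma step (m n : ℕ) (h : m ≤ n) :
    (1 - RatFunc.X^(n+1)) * ∑ j ∈ range (m+1), tt m (n+1) j
      = ∑ j ∈ range (m+1), tt m n j := by
  rw [mul_sum]
  rw [Finset.sum_congr rfl (fun j hj => Ej m n j (by simp at hj; omega)
    (by simp at hj; omega) (Or.inr h))]
  rw [Finset.sum_add_distrib, Finset.sum_range_sub' (fun j => bb m n j)]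
  have h0 : bb m n 0 = 0 := by simp [bb]
  have h1 : bb m n (m+1) = 0 := by
    rw [bb, if_neg (by omega)]
  rw [h0, h1, sub_zero, add_zero]

lemma diag (n : ℕ) :
    (1 - RatFunc.X^(n+1)) * ∑ j ∈ range (n+2), tt (n+1) (n+1) j
      = ∑ j ∈ range (n+1), tt (n+1) n j := by
  rw [sum_range_succ, mul_add, mul_sum]
  rw [Finset.sum_congr rfl (fun j hj => Ej (n+1) n j (by simp at hj; omega)
    (by simp at hj; omega) (Or.inl (by simp at hj; omega)))]
  rw [Finset.sum_add_distrib, Finset.sum_range_sub' (fun j => bb (n+1) n j)]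
  have h0 : bb (n+1) n 0 = 0 := by simp [bb]
  have h1 : bb (n+1) n (n+1) = RatFunc.X ^ 0 / (qPoch 0 * qPoch 0 * qPoch n) := by
    rw [bb, if_pos (by omega)]
    simp [Nat.sub_self]
  have h2 : tt (n+1) (n+1) (n+1) = RatFunc.X ^ 0 / (qPoch 0 * qPoch 0 * qPoch (n+1)) := by
    rw [tt]
    simp [Nat.sub_self]
  rw [h0, h1, h2, qPoch_succ n]
  have hc := one_sub_pow_ne n
  have hn := qPoch_ne n
  field_simp
  ring

lemma main (n : ℕ) : ∀ m, m ≤ n → ∑ j ∈ range (m+1), tt m n j = 1/(qPoch m * qPoch n) := by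
  induction n with
  | zero =>
    intro m hm
    obtain rfl : m = 0 := by omega
    simp [tt, qPoch]
  | succ n ih =>
    have key : ∀ m, m ≤ n → ∑ j ∈ range (m+1), tt m (n+1) j = 1/(qPoch m * qPoch (n+1)) := by
      intro m hm
      have h := step m n hm
      rw [ih m hm] at h
      have hc := one_sub_pow_ne n
      apply mul_left_cancel₀ hc
      rw [h, qPoch_succ n]
      have := qPoch_ne m
      have := qPoch_ne n
      field_simp
    intro m hm
    rcases Nat.lt_or_ge m (n+1) with hlt | hge
    · exact key m (by omega)
    · obtain rfl : m = n + 1 := by omega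
      have hd := diag n
      have hsum : ∑ j ∈ range (n+1), tt (n+1) n j = 1/(qPoch n * qPoch (n+1)) := by
        rw [Finset.sum_congr rfl (fun j _ => tt_symm (n+1) n j)]
        exact key n le_rfl
      rw [hsum] at hd
      have hc := one_sub_pow_ne n
      apply mul_left_cancel₀ hc
      rw [hd, qPoch_succ n]
      have := qPoch_ne n
      field_simp

end DurfeeAux

open DurfeeAux

/-- For all `m, n ≥ 0`:
`∑_{j=0}^{min(m,n)} q^{(m-j)(n-j)} / ((q)_{m-j} (q)_{n-j} (q)_j) = 1/((q)_m (q)_n)`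
as rational functions of `q`. -/
theorem durfee_rectangle_ratfunc (m n : ℕ) :
    (∑ j ∈ Finset.range (min m n + 1),
      RatFunc.X ^ ((m - j) * (n - j)) / (qPoch (m - j) * qPoch (n - j) * qPoch j)) =
      1 / (qPoch m * qPoch n) := by
  have hexp : ∀ m n j : ℕ, RatFunc.X ^ ((m - j) * (n - j)) /
      (qPoch (m - j) * qPoch (n - j) * qPoch j) = tt m n j := fun _ _ _ => rfl
  rcases le_total m n with h | h
  · rw [min_eq_left h]
    simpa only [hexp] using main n m h
  · rw [min_eq_right h]
    rw [Finset.sum_congr rfl (fun j _ => (hexp m n j))]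
    rw [Finset.sum_congr rfl (fun j _ => tt_symm m n j)]
    rw [main m n h, mul_comm]
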